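/- arXiv:1303.6979 — 3 statements merged into one kernel-verified Lean document; each statement's English description precedes it below -/
import Mathlib

section
/- Let X be a topological space, E a topological vector space, and Y a nonempty subset of E. If S : X → 2^Y is a lower semicontinuous correspondence and V is a nonempty open subset of E, then the correspondence T : X → 2^Y defined by T(x) = (S(x) + V) ∩ Y for each x ∈ X has an open graph in X × Y. -/
open Pointwise

/-- Lower semicontinuity of a correspondence. -/
def LSCorr {X Y : Type*} [TopologicalSpace X] [TopologicalSpace Y] (T : X → Set Y) : Prop :=
  ∀ x : X, ∀ V : Set Y, IsOpen V → (T x ∩ V).Nonempty →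
    ∃ U : Set X, IsOpen U ∧ x ∈ U ∧ ∀ y ∈ U, (T y ∩ V).Nonempty

/- The graph of `S x + V` is open because `y ∈ S x + V` says that `S x` meets the open set
`-V + y`, and that set moves continuously with `y`; lower semicontinuity of `S` then lets `x`
move as well. -/

theorem LSCorr.isOpen_setOf_exists_mem_prod {X Y Z : Type*} [TopologicalSpace X]
    [TopologicalSpace Y] [TopologicalSpace Z] {S : X → Set Y} (hS : LSCorr S)
    {W : Set (Z × Y)} (hW : IsOpen W) :
    IsOpen {p : X × Z | ∃ y ∈ S p.1, (p.2, y) ∈ W} := by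
  rw [isOpen_iff_mem_nhds]
  rintro ⟨x, z⟩ ⟨y, hyS, hzyW⟩
  obtain ⟨Nz, Ny, hNz, hNy, hzNz, hyNy, hNW⟩ := isOpen_prod_iff.mp hW z y hzyW
  obtain ⟨U, hU, hxU, hUmeets⟩ := hS x Ny hNy ⟨y, hyS, hyNy⟩
  filter_upwards [prod_mem_nhds (hU.mem_nhds hxU) (hNz.mem_nhds hzNz)]
  rintro ⟨x', z'⟩ ⟨hx'U, hz'Nz⟩
  obtain ⟨y', hy'S, hy'Ny⟩ := hUmeets x' hx'U
  exact ⟨y', hy'S, hNW ⟨hz'Nz, hy'Ny⟩⟩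

theorem LSCorr.isOpen_setOf_mem_add {X E : Type*} [TopologicalSpace X] [TopologicalSpace E]
    [AddGroup E] [IsTopologicalAddGroup E] {S : X → Set E} (hS : LSCorr S) {V : Set E}
    (hV : IsOpen V) :
    IsOpen {p : X × E | p.2 ∈ S p.1 + V} := by
  have hW : IsOpen {q : E × E | -q.2 + q.1 ∈ V} :=
    hV.preimage (continuous_snd.neg.add continuous_fst)
  convert hS.isOpen_setOf_exists_mem_prod hW using 1
  ext ⟨x, z⟩
  constructor
  · rintro ⟨s, hs, v, hv, rfl⟩
    exact ⟨s, hs, by simpa only [Set.mem_ofPred_eq, neg_add_cancel_left] using hv⟩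
  · rintro ⟨s, hs, hv⟩
    exact ⟨s, hs, -s + z, hv, add_neg_cancel_left s z⟩

theorem stmt1_general {X E : Type*} [TopologicalSpace X] [TopologicalSpace E]
    [AddCommGroup E] [IsTopologicalAddGroup E]
    (Y : Set E) (S : X → Set E)
    (hS : LSCorr S) (V : Set E) (hV : IsOpen V) :
    -- the graph of T(x) = (S(x) + V) ∩ Y is open in the subspace X × Y of X × E
    ∃ G : Set (X × E), IsOpen G ∧
      {p : X × E | p.2 ∈ (S p.1 + V) ∩ Y} = G ∩ (Set.univ ×ˢ Y) := by
  refine ⟨{p : X × E | p.2 ∈ S p.1 + V}, hS.isOpen_setOf_mem_add hV, ?_⟩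
  ext ⟨x, y⟩
  simp [and_comm]

theorem stmt1 {X E : Type*} [TopologicalSpace X] [TopologicalSpace E]
    [AddCommGroup E] [IsTopologicalAddGroup E]
    (Y : Set E) (hY : Y.Nonempty) (S : X → Set E) (hSY : ∀ x, S x ⊆ Y)
    (hS : LSCorr S) (V : Set E) (hV : IsOpen V) (hVne : V.Nonempty) :
    -- the graph of T(x) = (S(x) + V) ∩ Y is open in the subspace X × Y of X × E
    ∃ G : Set (X × E), IsOpen G ∧
      {p : X × E | p.2 ∈ (S p.1 + V) ∩ Y} = G ∩ (Set.univ ×ˢ Y) :=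
  stmt1_general Y S hS V hV
end

section
/- Let X be a topological space, Y a nonempty subset of a locally convex topological vector space E, T : X → 2^Y a correspondence, 𝔅 a basis of neighbourhoods of 0 in E consisting of open absolutely convex symmetric sets, and D a compact subset of Y. For each V ∈ 𝔅 define T^V : X → 2^Y by T^V(x) = (T(x) + V) ∩ D. Then ⋂_{V ∈ 𝔅} cl-graph-closure(T^V)(x) ⊆ cl-graph-closure(T)(x) for every x ∈ X, where for a correspondence S the map x ↦ S̄(x) = {y ∈ Y : (x,y) ∈ cl(Gr S)} is defined via the closure of its graph in X × Y. -/
open Pointwise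

/-- Graph of a correspondence. -/
def graphOf {X Y : Type*} (T : X → Set Y) : Set (X × Y) := {p | p.2 ∈ T p.1}

/-- The correspondence whose graph is the closure of the graph of `T`. -/
def gclos {X Y : Type*} [TopologicalSpace X] [TopologicalSpace Y]
    (T : X → Set Y) (x : X) : Set Y := {y | (x, y) ∈ closure (graphOf T)}

/-! Cutting down to `D` only shrinks `T + V`, so it suffices that the closed graph of `T` is the
intersection of the closed graphs of `T + V` over small neighbourhoods `V` of `0`. If a point
`t + v` of `T x' + V` lies in `y + V`, then `t ∈ y + (V - V)`, which lies in any prescribed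
neighbourhood of `y` once `V` is small enough. -/

open Filter Topology Set

section Correspondence

variable {X Y : Type*} [TopologicalSpace X] [TopologicalSpace Y]

theorem gclos_mono {S T : X → Set Y} (h : ∀ x, S x ⊆ T x) (x : X) : gclos S x ⊆ gclos T x :=
  fun _ hy => closure_mono (fun p hp => h p.1 hp) hy

theorem mem_gclos_iff {T : X → Set Y} {x : X} {y : Y} :
    y ∈ gclos T x ↔ ∀ U ∈ 𝓝 x, ∀ W ∈ 𝓝 y, ∃ x' ∈ U, (T x' ∩ W).Nonempty := by
  have hbasis := (𝓝 x).basis_sets.prod_nhds (𝓝 y).basis_sets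
  rw [gclos, mem_ofPred_eq, mem_closure_iff_nhds_basis hbasis]
  simp only [Prod.forall, graphOf, mem_ofPred_eq, mem_prod, Prod.exists, Set.Nonempty,
    mem_inter_iff]
  grind

end Correspondence

theorem exists_nhds_zero_sub_subset {E : Type*} [AddGroup E] [TopologicalSpace E]
    [IsTopologicalAddGroup E] {U : Set E} (hU : U ∈ 𝓝 (0 : E)) :
    ∃ V ∈ 𝓝 (0 : E), V - V ⊆ U := by
  have hsub : Tendsto (fun p : E × E => p.1 - p.2) (𝓝 0 ×ˢ 𝓝 0) (𝓝 0) := by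
    simpa only [nhds_prod_eq, sub_zero] using (continuous_sub (G := E)).tendsto (0, 0)
  obtain ⟨V, hV, hVV⟩ := mem_prod_self_iff.1 (hsub hU)
  exact ⟨V, hV, by rintro _ ⟨v, hv, w, hw, rfl⟩; exact hVV (mk_mem_prod hv hw)⟩

theorem mem_gclos_of_forall_mem_gclos_add {X E : Type*} [TopologicalSpace X] [AddGroup E]
    [TopologicalSpace E] [IsTopologicalAddGroup E] {T : X → Set E} {x : X} {y : E}
    (h : ∀ V ∈ 𝓝 (0 : E), y ∈ gclos (fun x' => T x' + V) x) : y ∈ gclos T x := by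
  refine mem_gclos_iff.2 fun U hU W hW => ?_
  obtain ⟨V, hV, hVV⟩ :=
    exists_nhds_zero_sub_subset ((continuous_const_add y).tendsto' 0 y (add_zero y) hW)
  have hyV : (-y + ·) ⁻¹' V ∈ 𝓝 y :=
    (continuous_const_add (-y)).tendsto' y 0 (neg_add_cancel y) hV
  obtain ⟨x', hx', _, ⟨t, ht, v, hv, rfl⟩, hw⟩ := mem_gclos_iff.1 (h V hV) U hU _ hyV
  refine ⟨x', hx', t, ht, ?_⟩
  have hW : y + ((-y + (t + v)) - v) ∈ W := hVV ⟨_, hw, v, hv, rfl⟩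
  simpa only [add_sub_assoc, add_neg_cancel_left, sub_self, add_zero] using hW

theorem stmt2_general {X E : Type*} [TopologicalSpace X] [TopologicalSpace E]
    [AddCommGroup E] [IsTopologicalAddGroup E]
    (T : X → Set E)
    (𝔅 : Set (Set E))
    (h𝔅basis : ∀ U ∈ nhds (0 : E), ∃ V ∈ 𝔅, V ⊆ U)
    (D : Set E) :
    ∀ x : X, (⋂ V ∈ 𝔅, gclos (fun x' => (T x' + V) ∩ D) x) ⊆ gclos T x := by
  intro x y hy
  refine mem_gclos_of_forall_mem_gclos_add fun U hU => ?_
  obtain ⟨V, hV𝔅, hVU⟩ := h𝔅basis U hU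
  exact gclos_mono (fun x' => inter_subset_left.trans (add_subset_add_left hVU)) x
    (mem_iInter₂.1 hy V hV𝔅)

theorem stmt2 {X E : Type*} [TopologicalSpace X] [TopologicalSpace E]
    [AddCommGroup E] [Module ℝ E] [IsTopologicalAddGroup E] [ContinuousSMul ℝ E]
    [LocallyConvexSpace ℝ E]
    (Y : Set E) (hY : Y.Nonempty) (T : X → Set E) (hTY : ∀ x, T x ⊆ Y)
    (𝔅 : Set (Set E))
    (h𝔅 : ∀ V ∈ 𝔅, IsOpen V ∧ (0 : E) ∈ V ∧ Balanced ℝ V ∧ Convex ℝ V)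
    (h𝔅basis : ∀ U ∈ nhds (0 : E), ∃ V ∈ 𝔅, V ⊆ U)
    (D : Set E) (hD : IsCompact D) (hDY : D ⊆ Y) :
    ∀ x : X, (⋂ V ∈ 𝔅, gclos (fun x' => (T x' + V) ∩ D) x) ⊆ gclos T x :=
  stmt2_general T 𝔅 h𝔅basis D
end

section
/- Define T₁ : (0,2) → 2^{[1,4]} by T₁(x) = [2−x, 2] for x ∈ (0,1), T₁(1) = {4}, T₁(x) = [1,2] for x ∈ (1,2), and let D = [1,2]. For every ε ≥ 1 and V = (−ε, ε), the correspondence T₁^V(x) = (T₁(x) + V) ∩ D equals [1,2] for all x ∈ (0,2) with x ≠ 1 and equals ∅ when ε ∈ [1,2] and x = 1; moreover, for every ε > 0 the closure-of-graph correspondence of T₁^V is lower semicontinuous with nonempty values, so T₁ is almost w-lower semicontinuous with respect to D. -/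
open Pointwise

/-- Lower semicontinuity of a correspondence on a subset `A` of its domain. -/
def LSCOn {X Y : Type*} [TopologicalSpace X] [TopologicalSpace Y]
    (T : X → Set Y) (A : Set X) : Prop :=
  ∀ x ∈ A, ∀ V : Set Y, IsOpen V → (T x ∩ V).Nonempty →
    ∃ U : Set X, IsOpen U ∧ x ∈ U ∧ ∀ y ∈ U ∩ A, (T y ∩ V).Nonempty

/-- Closure-of-graph correspondence of `T` regarded as defined on `A`. -/
def gclosOn {X Y : Type*} [TopologicalSpace X] [TopologicalSpace Y]
    (T : X → Set Y) (A : Set X) (x : X) : Set Y :=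
  {y | (x, y) ∈ closure {p : X × Y | p.1 ∈ A ∧ p.2 ∈ T p.1}}

noncomputable def T₁ : ℝ → Set ℝ := fun x =>
  if x < 1 then Set.Icc (2 - x) 2 else if x = 1 then {4} else Set.Icc 1 2

noncomputable def T₁V (ε : ℝ) : ℝ → Set ℝ :=
  fun x => (T₁ x + Set.Ioo (-ε) ε) ∩ Set.Icc 1 2

/-- `T` is almost w-lower semicontinuous with respect to `D` on `A`. -/
def AlmostWLSCOn (T : ℝ → Set ℝ) (D A : Set ℝ) : Prop :=
  ∃ 𝔅 : Set (Set ℝ),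
    (∀ V ∈ 𝔅, IsOpen V ∧ (0 : ℝ) ∈ V ∧ V = -V) ∧
    (∀ U ∈ nhds (0 : ℝ), ∃ V ∈ 𝔅, V ⊆ U) ∧
    ∀ V ∈ 𝔅, LSCOn (gclosOn (fun x => (T x + V) ∩ D) A) A

/-!
For `x ≠ 1` the values of `T₁V ε` are `[1, 2] ∩ (2 - x - ε, ∞)`, while at `x = 1` they lie in
`[1, 2]`. Hence the closure of the graph over `(0, 2)` has the values `[max 1 (2 - x - ε), 2]`
(the fibre over `1` is recovered from the right, where `T₁V ε = [1, 2]`). An interval correspondence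
with continuous endpoints and nonempty interior is lower semicontinuous: any open set meeting
`[f x, g x]` meets `(f x, g x)` at some `y`, and `f z < y < g z` persists near `x`.
-/

open Set

theorem Set.Icc_add_Ioo {𝕜 : Type*} [Field 𝕜] [LinearOrder 𝕜] [IsStrictOrderedRing 𝕜]
    {a b c d : 𝕜} (hab : a ≤ b) (hcd : c < d) :
    Icc a b + Ioo c d = Ioo (a + c) (b + d) := by
  ext y
  constructor
  · rintro ⟨u, ⟨hau, hub⟩, v, ⟨hcv, hvd⟩, rfl⟩
    exact ⟨add_lt_add_of_le_of_lt hau hcv, add_lt_add_of_le_of_lt hub hvd⟩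
  · rintro ⟨hy, hy'⟩
    -- clamp `y - (c + d) / 2` to `[a, b]`
    set u := max a (min b (y - (c + d) / 2))
    refine ⟨u, ⟨le_max_left _ _, max_le hab (min_le_left _ _)⟩, y - u, ⟨?_, ?_⟩,
      add_sub_cancel _ _⟩ <;> grind

section T₁V

variable {ε x : ℝ}

theorem T₁V_of_ne_one (hε : 0 < ε) (hx : 0 ≤ x) (hx1 : x ≠ 1) :
    T₁V ε x = Icc 1 2 ∩ Ioi (2 - x - ε) := by
  ext y
  rcases hx1.lt_or_gt with hlt | hgt
  · simp only [T₁V, T₁, if_pos hlt, Icc_add_Ioo (by linarith : 2 - x ≤ 2) (neg_lt_self hε),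
      mem_inter_iff, mem_Ioo, mem_Icc, mem_Ioi]
    grind
  · simp only [T₁V, T₁, if_neg hgt.not_gt, if_neg hgt.ne', Icc_add_Ioo one_le_two (neg_lt_self hε),
      mem_inter_iff, mem_Ioo, mem_Icc, mem_Ioi]
    grind

theorem T₁V_one : T₁V ε 1 = Ioo (4 - ε) (4 + ε) ∩ Icc 1 2 := by
  simp only [T₁V, T₁, lt_irrefl, if_false, if_true, singleton_add, image_const_add_Ioo,
    ← sub_eq_add_neg]

end T₁V

section Correspondence

variable {X Y : Type*} [TopologicalSpace X] [TopologicalSpace Y]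

theorem LSCOn.congr {T T' : X → Set Y} {A : Set X} (hT : LSCOn T A)
    (h : ∀ x ∈ A, T x = T' x) : LSCOn T' A := by
  intro x hx V hV hxV
  rw [← h x hx] at hxV
  obtain ⟨U, hU, hxU, hUV⟩ := hT x hx V hV hxV
  exact ⟨U, hU, hxU, fun y hy => h y hy.2 ▸ hUV y hy⟩

theorem gclosOn_subset {T : X → Set Y} {A : Set X} {C : Set (X × Y)} (hC : IsClosed C)
    (hTC : ∀ x ∈ A, ∀ y ∈ T x, (x, y) ∈ C) {x : X} {y : Y} (hy : y ∈ gclosOn T A x) :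
    (x, y) ∈ C :=
  closure_minimal (fun p hp => hTC p.1 hp.1 p.2 hp.2) hC hy

theorem closure_subset_gclosOn {T : X → Set Y} {A s : Set X} {t : Set Y}
    (hst : ∀ x ∈ s, x ∈ A ∧ t ⊆ T x) {x : X} (hx : x ∈ closure s) :
    closure t ⊆ gclosOn T A x := by
  intro y hy
  have hxy : (x, y) ∈ closure (s ×ˢ t) := by rw [closure_prod_eq]; exact ⟨hx, hy⟩
  refine closure_mono ?_ hxy
  exact fun p hp => ⟨(hst p.1 hp.1).1, (hst p.1 hp.1).2 hp.2⟩

theorem lscOn_Icc {A : Set X} {f g : X → ℝ} (hf : Continuous f) (hg : Continuous g)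
    (hfg : ∀ x ∈ A, f x < g x) : LSCOn (fun x => Icc (f x) (g x)) A := by
  intro x hx V hV hxV
  obtain ⟨y, ⟨hfy, hyg⟩, hyV⟩ : (Ioo (f x) (g x) ∩ V).Nonempty := by
    rwa [← closure_inter_open_nonempty_iff hV, closure_Ioo (hfg x hx).ne]
  refine ⟨f ⁻¹' Iio y ∩ g ⁻¹' Ioi y, (isOpen_Iio.preimage hf).inter (isOpen_Ioi.preimage hg),
    ⟨hfy, hyg⟩, fun z ⟨⟨hfz, hzg⟩, _⟩ => ⟨y, ⟨le_of_lt hfz, le_of_lt hzg⟩, hyV⟩⟩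

end Correspondence

theorem gclosOn_T₁V {ε x : ℝ} (hε : 0 < ε) (hx : x ∈ Ioo (0 : ℝ) 2) :
    gclosOn (T₁V ε) (Ioo 0 2) x = Icc (max 1 (2 - x - ε)) 2 := by
  have hmax_one : max 1 (2 - 1 - ε) = (1 : ℝ) := max_eq_left (by linarith)
  apply Subset.antisymm
  · refine fun y hy => gclosOn_subset (C := {p | max 1 (2 - p.1 - ε) ≤ p.2 ∧ p.2 ≤ 2})
      ((isClosed_le (by fun_prop) continuous_snd).inter (isClosed_le continuous_snd
        continuous_const)) ?_ hy
    rintro x' ⟨hx'0, -⟩ y' hy'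
    rcases eq_or_ne x' 1 with rfl | hx'1
    · rw [T₁V_one] at hy'
      exact ⟨hmax_one.symm ▸ hy'.2.1, hy'.2.2⟩
    · rw [T₁V_of_ne_one hε hx'0.le hx'1] at hy'
      exact ⟨max_le hy'.1.1 (le_of_lt hy'.2), hy'.1.2⟩
  · rcases eq_or_ne x 1 with rfl | hx1
    · rw [hmax_one, ← isClosed_Icc.closure_eq]
      refine closure_subset_gclosOn (s := Ioo 1 2) ?_ ?_
      · rintro x' ⟨h1x', hx'2⟩
        rw [T₁V_of_ne_one hε (by linarith) h1x'.ne']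
        exact ⟨⟨by linarith, hx'2⟩, fun y hy => ⟨hy, show 2 - x' - ε < y by linarith [hy.1]⟩⟩
      · rw [closure_Ioo one_lt_two.ne]
        exact left_mem_Icc.2 one_le_two
    · have hlt : max 1 (2 - x - ε) < 2 := max_lt one_lt_two (by linarith [hx.1])
      rw [← closure_Ioc hlt.ne]
      refine closure_subset_gclosOn (s := {x}) ?_ (subset_closure rfl)
      rintro _ rfl
      rw [T₁V_of_ne_one hε hx.1.le hx1]
      exact ⟨hx, fun y hy => ⟨⟨(le_max_left _ _).trans hy.1.le, hy.2⟩,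
        (le_max_right _ _).trans_lt hy.1⟩⟩

theorem lscOn_gclosOn_T₁V {ε : ℝ} (hε : 0 < ε) :
    LSCOn (gclosOn (T₁V ε) (Ioo 0 2)) (Ioo 0 2) :=
  (lscOn_Icc (by fun_prop) continuous_const fun x hx =>
    max_lt one_lt_two (by linarith [hx.1])).congr fun x hx => (gclosOn_T₁V hε hx).symm

theorem stmt8 :
    (∀ ε : ℝ, 1 ≤ ε → ∀ x ∈ Set.Ioo (0 : ℝ) 2, x ≠ 1 → T₁V ε x = Set.Icc 1 2) ∧
    (∀ ε ∈ Set.Icc (1 : ℝ) 2, T₁V ε 1 = ∅) ∧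
    (∀ ε : ℝ, 0 < ε →
      LSCOn (gclosOn (T₁V ε) (Set.Ioo (0 : ℝ) 2)) (Set.Ioo (0 : ℝ) 2) ∧
      ∀ x ∈ Set.Ioo (0 : ℝ) 2, (gclosOn (T₁V ε) (Set.Ioo (0 : ℝ) 2) x).Nonempty) ∧
    AlmostWLSCOn T₁ (Set.Icc 1 2) (Set.Ioo 0 2) := by
  refine ⟨?_, ?_, fun ε hε => ⟨lscOn_gclosOn_T₁V hε, fun x hx => ?_⟩, ?_⟩
  · rintro ε hε x ⟨hx0, -⟩ hx1
    rw [T₁V_of_ne_one (by linarith) hx0.le hx1, inter_eq_left]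
    exact fun y hy => show 2 - x - ε < y by linarith [hy.1]
  · rintro ε ⟨-, hε⟩
    rw [T₁V_one, eq_empty_iff_forall_notMem]
    exact fun y hy => by linarith [hy.1.1, hy.2.2]
  · rw [gclosOn_T₁V hε hx]
    exact nonempty_Icc.2 (max_le one_le_two (by linarith [hx.1]))
  · refine ⟨(fun ε => Ioo (-ε) ε) '' Ioi 0, ?_, fun U hU => ?_, ?_⟩
    · rintro _ ⟨ε, hε, rfl⟩
      exact ⟨isOpen_Ioo, ⟨neg_lt_zero.2 hε, hε⟩, by rw [neg_Ioo, neg_neg]⟩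
    · obtain ⟨ε, hε, hεU⟩ := Metric.mem_nhds_iff.1 hU
      exact ⟨Ioo (-ε) ε, mem_image_of_mem _ hε, by rwa [← Real.ball_zero_eq_Ioo]⟩
    · rintro _ ⟨ε, hε, rfl⟩
      exact lscOn_gclosOn_T₁V hε
end
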